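/- arXiv:2402.06376 — 2 statements merged into one kernel-verified Lean document; each statement's English description precedes it below -/
import Mathlib

section
/- Let H be a real Hilbert space, let f : H → ℝ be locally Lipschitz near x ∈ H, let v ∈ H with v ≠ 0 and α ∈ ℝ. If α > ⟨w, v⟩ for all w ∈ ∂f(x), then there exists ε̄ > 0 such that for all ε with 0 ≤ ε ≤ ε̄ one has α > ⟨w, v⟩ for all w ∈ ∂_ε f(x). -/
open Filter Topology RealInnerProductSpace

/-- Clarke generalized directional derivative
`f°(x;v) = limsup_{y→x, t↓0} (f(y+tv) − f(y))/t`. -/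
noncomputable def clarkeDir {H : Type*} [NormedAddCommGroup H] [InnerProductSpace ℝ H]
    (f : H → ℝ) (x v : H) : ℝ :=
  limsup (fun p : H × ℝ => (f (p.1 + p.2 • v) - f p.1) / p.2)
    ((𝓝 x) ×ˢ (𝓝[>] (0 : ℝ)))

/-- Clarke subdifferential, with the dual of `H` identified with `H` via the Riesz map:
`∂f(x) = {w : ⟪w, v⟫ ≤ f°(x;v) for all v}`. -/
def clarkeSubdiff {H : Type*} [NormedAddCommGroup H] [InnerProductSpace ℝ H]
    (f : H → ℝ) (x : H) : Set H :=
  {w : H | ∀ v : H, ⟪w, v⟫ ≤ clarkeDir f x v}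

/-- Goldstein ε-subdifferential
`∂_ε f(x) = closure (convexHull (⋃_{y ∈ closedBall x ε} ∂f(y)))`. -/
def goldsteinSubdiff {H : Type*} [NormedAddCommGroup H] [InnerProductSpace ℝ H]
    (f : H → ℝ) (ε : ℝ) (x : H) : Set H :=
  closure (convexHull ℝ (⋃ y ∈ Metric.closedBall x ε, clarkeSubdiff f y))

/-- `f` is locally Lipschitz near `x`: Lipschitz on some open ball around `x`. -/
def LocallyLipschitzNear {H : Type*} [NormedAddCommGroup H]
    (f : H → ℝ) (x : H) : Prop :=
  ∃ ε > 0, ∃ L : NNReal, LipschitzOnWith L f (Metric.ball x ε)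

/-- Multiobjective ε-subdifferential `F_ε(x) = closure (convexHull (⋃ i, ∂_ε f_i(x)))`. -/
def multiSubdiff {H : Type*} [NormedAddCommGroup H] [InnerProductSpace ℝ H]
    {k : ℕ} (f : Fin k → H → ℝ) (ε : ℝ) (x : H) : Set H :=
  closure (convexHull ℝ (⋃ i : Fin k, goldsteinSubdiff (f i) ε x))

/-- The weak topology on `H`: the topology induced by the functionals `⟪·, v⟫`, `v : H`. -/
noncomputable def weakTopology (H : Type*) [NormedAddCommGroup H] [InnerProductSpace ℝ H] :
    TopologicalSpace H :=
  ⨅ v : H, TopologicalSpace.induced (fun x : H => ⟪x, v⟫) inferInstance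

/-! Near `x` the Clarke directional derivative `f°(x; ·)` is sublinear and bounded by `L‖·‖`, so
Hahn–Banach and the Riesz representation produce `w ∈ ∂f(x)` with `⟪w, v⟫ = f°(x; v)`; hence
`f°(x; v) < α`. Being a limsup over `y → x`, `f°(·; v)` is upper semicontinuous, so
`f°(y; v) ≤ c < α` for all `y` near `x`: every such `∂f(y)` lies in the closed convex half-space
`{w | ⟪w, v⟫ ≤ c}`, which therefore contains `∂_ε f(x)` for small `ε`. -/

open Metric Set

theorem exists_linearMap_le_sublinear_eq {E : Type*} [AddCommGroup E] [Module ℝ E] (N : E → ℝ)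
    (N_hom : ∀ c : ℝ, 0 < c → ∀ x, N (c • x) = c * N x) (N_add : ∀ x y, N (x + y) ≤ N x + N y)
    (v : E) : ∃ g : E →ₗ[ℝ] ℝ, (∀ x, g x ≤ N x) ∧ g v = N v := by
  have N_zero : N 0 = 0 := by
    have h := N_hom 2 two_pos 0
    rw [smul_zero] at h
    linarith
  have hwd : ∀ c : ℝ, c • v = 0 → c • N v = 0 := fun c hc => by
    rcases smul_eq_zero.1 hc with rfl | rfl
    · rw [zero_smul]
    · rw [N_zero, smul_zero]
  have hdom : ∀ c : ℝ, c * N v ≤ N (c • v) := fun c => by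
    rcases lt_trichotomy c 0 with hc | rfl | hc
    · have hpair := N_add v (-v)
      rw [add_neg_cancel, N_zero] at hpair
      rw [← neg_smul_neg, N_hom _ (neg_pos.2 hc)]
      nlinarith
    · rw [zero_smul, zero_mul, N_zero]
    · rw [N_hom c hc]
  obtain ⟨g, hg_ext, hg_le⟩ := exists_extension_of_le_sublinear
    (LinearPMap.mkSpanSingleton' (σ := RingHom.id ℝ) v (N v) hwd) N N_hom N_add
    (fun ⟨z, hz⟩ => by
      obtain ⟨c, rfl⟩ := Submodule.mem_span_singleton.1 hz
      rw [LinearPMap.mkSpanSingleton'_apply, RingHom.id_apply, smul_eq_mul]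
      exact hdom c)
  exact ⟨g, hg_le, (hg_ext ⟨v, Submodule.mem_span_singleton_self v⟩).trans
    (LinearPMap.mkSpanSingleton'_apply_self (σ := RingHom.id ℝ) v (N v) hwd _)⟩

section ClarkeQuotient

variable {E : Type*} [NormedAddCommGroup E] [NormedSpace ℝ E]

noncomputable def clarkeQuot (f : E → ℝ) (v : E) (p : E × ℝ) : ℝ :=
  (f (p.1 + p.2 • v) - f p.1) / p.2

theorem tendsto_fst_add_snd_smul (z u : E) :
    Tendsto (fun p : E × ℝ => p.1 + p.2 • u) (𝓝 z ×ˢ 𝓝[>] (0 : ℝ)) (𝓝 z) := by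
  have h0 : Tendsto (fun p : E × ℝ => p.2) (𝓝 z ×ˢ 𝓝[>] 0) (𝓝 0) :=
    tendsto_snd.mono_right nhdsWithin_le_nhds
  simpa using tendsto_fst.add (h0.smul_const u)

theorem eventually_abs_clarkeQuot_le {f : E → ℝ} {s : Set E} {L : NNReal} (hs : IsOpen s)
    (hL : LipschitzOnWith L f s) {z : E} (hz : z ∈ s) (u : E) :
    ∀ᶠ p in 𝓝 z ×ˢ 𝓝[>] (0 : ℝ), |clarkeQuot f u p| ≤ L * ‖u‖ := by
  filter_upwards [tendsto_fst.eventually (hs.mem_nhds hz),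
    (tendsto_fst_add_snd_smul z u).eventually (hs.mem_nhds hz),
    tendsto_snd.eventually self_mem_nhdsWithin] with p hp hpu (ht : 0 < p.2)
  rw [clarkeQuot, abs_div, abs_of_pos ht, div_le_iff₀ ht, ← Real.dist_eq]
  calc dist (f (p.1 + p.2 • u)) (f p.1) ≤ L * dist (p.1 + p.2 • u) p.1 :=
        hL.dist_le_mul _ hpu _ hp
    _ = L * ‖u‖ * p.2 := by
        rw [dist_eq_norm, add_sub_cancel_left, norm_smul, Real.norm_of_nonneg ht.le]; ring

theorem isBoundedUnder_clarkeQuot {f : E → ℝ} {s : Set E} {L : NNReal} (hs : IsOpen s)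
    (hL : LipschitzOnWith L f s) {z : E} (hz : z ∈ s) (u : E) :
    (𝓝 z ×ˢ 𝓝[>] 0).IsBoundedUnder (· ≤ ·) (clarkeQuot f u) ∧
      (𝓝 z ×ˢ 𝓝[>] 0).IsBoundedUnder (· ≥ ·) (clarkeQuot f u) :=
  isBoundedUnder_le_abs.1 <|
    isBoundedUnder_of_eventually_le (eventually_abs_clarkeQuot_le hs hL hz u)

end ClarkeQuotient

section ClarkeDir

variable {H : Type*} [NormedAddCommGroup H] [InnerProductSpace ℝ H]
  {f : H → ℝ} {s : Set H} {L : NNReal} {x : H}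

theorem clarkeDir_eq_limsup (f : H → ℝ) (x v : H) :
    clarkeDir f x v = limsup (clarkeQuot f v) (𝓝 x ×ˢ 𝓝[>] 0) := rfl

theorem clarkeDir_le_mul_norm (hs : IsOpen s) (hL : LipschitzOnWith L f s) (hx : x ∈ s) (u : H) :
    clarkeDir f x u ≤ L * ‖u‖ :=
  limsup_le_of_le (isBoundedUnder_clarkeQuot hs hL hx u).2.isCoboundedUnder_le
    ((eventually_abs_clarkeQuot_le hs hL hx u).mono fun _ hp => (abs_le.1 hp).2)

theorem clarkeDir_smul (hs : IsOpen s) (hL : LipschitzOnWith L f s) (hx : x ∈ s)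
    {c : ℝ} (hc : 0 < c) (u : H) : clarkeDir f x (c • u) = c * clarkeDir f x u := by
  have hmap : map (c * ·) (𝓝[>] (0 : ℝ)) = 𝓝[>] 0 := by
    simpa [image_const_mul_Ioi_zero hc] using
      (Homeomorph.mulLeft₀ c hc.ne').isEmbedding.map_nhdsWithin_eq (Ioi 0) 0
  have hrescale : clarkeQuot f (c • u) =
      ((c * ·) ∘ clarkeQuot f u) ∘ Prod.map id (c * ·) := by
    funext p
    simp only [clarkeQuot, Function.comp, Prod.map, id, smul_smul, mul_comm p.2 c]
    field_simp
  have bdd := isBoundedUnder_clarkeQuot hs hL hx u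
  have hfilter : map (Prod.map id (c * ·)) (𝓝 x ×ˢ 𝓝[>] 0) = 𝓝 x ×ˢ 𝓝[>] (0 : ℝ) := by
    rw [← prod_map_map_eq', map_id, hmap]
  rw [clarkeDir_eq_limsup, hrescale, limsup_comp, hfilter]
  exact ((monotone_mul_left_of_nonneg hc.le).map_limsup_of_continuousAt _
    (continuous_const_mul c).continuousAt bdd.1 bdd.2.isCoboundedUnder_le).symm

theorem clarkeDir_add_le (hs : IsOpen s) (hL : LipschitzOnWith L f s) (hx : x ∈ s) (u w : H) :
    clarkeDir f x (u + w) ≤ clarkeDir f x u + clarkeDir f x w := by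
  set ψ : H × ℝ → H × ℝ := fun p => (p.1 + p.2 • w, p.2)
  have hψ : Tendsto ψ (𝓝 x ×ˢ 𝓝[>] 0) (𝓝 x ×ˢ 𝓝[>] 0) :=
    (tendsto_fst_add_snd_smul x w).prodMk tendsto_snd
  have hsplit : clarkeQuot f (u + w) = clarkeQuot f u ∘ ψ + clarkeQuot f w := by
    funext p
    simp only [clarkeQuot, ψ, Function.comp, Pi.add_apply, smul_add, ← add_assoc,
      add_right_comm p.1]
    ring
  have bdd_u := isBoundedUnder_le_abs.1 (isBoundedUnder_of_eventually_le
    (hψ.eventually (eventually_abs_clarkeQuot_le hs hL hx u)))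
  have bdd_w := isBoundedUnder_clarkeQuot hs hL hx w
  calc clarkeDir f x (u + w)
      ≤ limsup (clarkeQuot f u ∘ ψ) (𝓝 x ×ˢ 𝓝[>] 0) + clarkeDir f x w := by
        rw [clarkeDir_eq_limsup, hsplit]
        exact limsup_add_le bdd_u.2 bdd_u.1 bdd_w.2.isCoboundedUnder_le bdd_w.1
    _ ≤ clarkeDir f x u + clarkeDir f x w := by
        gcongr
        exact hψ.limsup_comp_le_limsup bdd_u.2.isCoboundedUnder_le
          (isBoundedUnder_clarkeQuot hs hL hx u).1

theorem exists_mem_clarkeSubdiff_inner_eq [CompleteSpace H] (hs : IsOpen s)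
    (hL : LipschitzOnWith L f s) (hx : x ∈ s) (v : H) :
    ∃ w ∈ clarkeSubdiff f x, ⟪w, v⟫ = clarkeDir f x v := by
  obtain ⟨g, hg_le, hg_v⟩ := exists_linearMap_le_sublinear_eq (clarkeDir f x)
    (fun _ hc u => clarkeDir_smul hs hL hx hc u) (clarkeDir_add_le hs hL hx) v
  have hg_bound : ∀ u, ‖g u‖ ≤ L * ‖u‖ := fun u => by
    rw [Real.norm_eq_abs, abs_le]
    constructor
    · have h := (hg_le (-u)).trans (clarkeDir_le_mul_norm hs hL hx (-u))
      rw [map_neg, norm_neg] at h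
      linarith
    · exact (hg_le u).trans (clarkeDir_le_mul_norm hs hL hx u)
  set w := (InnerProductSpace.toDual ℝ H).symm (g.mkContinuous L hg_bound)
  have hw : ∀ u, ⟪w, u⟫ = g u := fun _ => InnerProductSpace.toDual_symm_apply
  exact ⟨w, fun u => (hw u).trans_le (hg_le u), (hw v).trans hg_v⟩

theorem eventually_clarkeDir_le (hs : IsOpen s) (hL : LipschitzOnWith L f s) (hx : x ∈ s)
    {v : H} {c : ℝ} (hc : clarkeDir f x v < c) : ∀ᶠ y in 𝓝 x, clarkeDir f y v ≤ c := by
  obtain ⟨P, hP, T, hT, hPT⟩ := eventually_prod_iff.1 <|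
    eventually_lt_of_limsup_lt hc (isBoundedUnder_clarkeQuot hs hL hx v).1
  obtain ⟨U, hUP, hU, hxU⟩ := _root_.eventually_nhds_iff.1 hP
  filter_upwards [hU.mem_nhds hxU, hs.mem_nhds hx] with y hyU hys
  refine limsup_le_of_le (isBoundedUnder_clarkeQuot hs hL hys v).2.isCoboundedUnder_le ?_
  filter_upwards [prod_mem_prod (hU.mem_nhds hyU) hT] with p hp
  exact (hPT (hUP _ hp.1) hp.2).le

theorem goldsteinSubdiff_subset {S : Set H} (hS : Convex ℝ S) (hS' : IsClosed S) {ε : ℝ}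
    (h : ∀ y ∈ closedBall x ε, clarkeSubdiff f y ⊆ S) : goldsteinSubdiff f ε x ⊆ S :=
  closure_minimal (convexHull_min (iUnion₂_subset h) hS) hS'

end ClarkeDir

theorem stmt2_general {H : Type*} [NormedAddCommGroup H] [InnerProductSpace ℝ H] [CompleteSpace H]
    (f : H → ℝ) (x : H) (hlip : LocallyLipschitzNear f x)
    (v : H) (α : ℝ)
    (h : ∀ w ∈ clarkeSubdiff f x, ⟪w, v⟫ < α) :
    ∃ εbar > 0, ∀ ε : ℝ, 0 ≤ ε → ε ≤ εbar →
      ∀ w ∈ goldsteinSubdiff f ε x, ⟪w, v⟫ < α := by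
  obtain ⟨r, hr, L, hL⟩ := hlip
  have hx : x ∈ ball x r := mem_ball_self hr
  obtain ⟨w₀, hw₀, hw₀v⟩ := exists_mem_clarkeSubdiff_inner_eq isOpen_ball hL hx v
  obtain ⟨c, hxc, hcα⟩ := exists_between (hw₀v ▸ h w₀ hw₀)
  obtain ⟨δ, hδ, hδc⟩ :=
    Metric.eventually_nhds_iff_ball.1 (eventually_clarkeDir_le isOpen_ball hL hx hxc)
  refine ⟨δ / 2, half_pos hδ, fun ε _ hεδ w hw => ?_⟩
  have hsub : goldsteinSubdiff f ε x ⊆ {w | ⟪w, v⟫ ≤ c} := by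
    have hlin : IsLinearMap ℝ fun w : H => ⟪w, v⟫ :=
      ⟨fun a b => inner_add_left a b v, fun t a => real_inner_smul_left a v t⟩
    refine goldsteinSubdiff_subset (convex_halfSpace_le hlin c)
      (isClosed_le (continuous_id.inner continuous_const) continuous_const) fun y hy w hw => ?_
    exact (hw v).trans (hδc y (closedBall_subset_ball (by linarith) hy))
  exact (hsub hw).trans_lt hcα

/-- Separation of the Clarke subdifferential extends to `∂_ε f(x)` for small `ε`. -/
theorem stmt2 {H : Type*} [NormedAddCommGroup H] [InnerProductSpace ℝ H] [CompleteSpace H]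
    (f : H → ℝ) (x : H) (hlip : LocallyLipschitzNear f x)
    (v : H) (hv : v ≠ 0) (α : ℝ)
    (h : ∀ w ∈ clarkeSubdiff f x, ⟪w, v⟫ < α) :
    ∃ εbar > 0, ∀ ε : ℝ, 0 ≤ ε → ε ≤ εbar →
      ∀ w ∈ goldsteinSubdiff f ε x, ⟪w, v⟫ < α :=
  stmt2_general f x hlip v α h
end

section
/- Let H be a real Hilbert space and f : H → ℝ locally Lipschitz near x ∈ H. Let (x_i) be a sequence in H converging to x in norm, (ε_i) a sequence of positive reals tending to 0, and (w_i) a sequence in H with w_i ∈ ∂_{ε_i} f(x_i) for all i. If w ∈ H is a weak sequential accumulation point of (w_i) (i.e., some subsequence of (w_i) converges to w in the weak topology), then w ∈ ∂f(x). -/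
open Filter Topology RealInnerProductSpace

/-! The Clarke derivative `f°(·; v)` is upper semicontinuous at points near which `f` is
Lipschitz. So if `f°(x; v) < c`, then for large `i` every Clarke subgradient at a point of
`closedBall (xs i) (εs i)`, hence every element of `∂_{εs i} f (xs i)`, lies in the closed
convex half-space `{⟪·, v⟫ ≤ c}`, which weak limits cannot leave: `⟪w, v⟫ ≤ c`. -/

section DiffQuot

variable {E : Type*} [NormedAddCommGroup E] [NormedSpace ℝ E]

noncomputable def diffQuot (f : E → ℝ) (v : E) (p : E × ℝ) : ℝ :=
  (f (p.1 + p.2 • v) - f p.1) / p.2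

variable {f : E → ℝ} {L : NNReal} {s : Set E}

lemma abs_diffQuot_le (hf : LipschitzOnWith L f s) (v : E) {p : E × ℝ}
    (hp : 0 < p.2) (h₁ : p.1 ∈ s) (h₂ : p.1 + p.2 • v ∈ s) :
    |diffQuot f v p| ≤ L * ‖v‖ := by
  rw [diffQuot, abs_div, abs_of_pos hp, div_le_iff₀ hp, ← Real.dist_eq]
  calc dist (f (p.1 + p.2 • v)) (f p.1) ≤ L * dist (p.1 + p.2 • v) p.1 :=
        hf.dist_le_mul _ h₂ _ h₁
    _ = L * ‖v‖ * p.2 := by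
      rw [dist_eq_norm, add_sub_cancel_left, norm_smul, Real.norm_of_nonneg hp.le]; ring

lemma eventually_abs_diffQuot_le (hf : LipschitzOnWith L f s) (v : E) {y : E} (hs : s ∈ 𝓝 y) :
    ∀ᶠ p in 𝓝 y ×ˢ 𝓝[>] (0 : ℝ), |diffQuot f v p| ≤ L * ‖v‖ := by
  have hstep : Tendsto (fun p : E × ℝ => p.2) (𝓝 y ×ˢ 𝓝[>] 0) (𝓝 0) :=
    tendsto_snd.mono_right nhdsWithin_le_nhds
  have hshift : Tendsto (fun p : E × ℝ => p.1 + p.2 • v) (𝓝 y ×ˢ 𝓝[>] 0) (𝓝 y) := by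
    simpa using tendsto_fst.add (hstep.smul_const v)
  filter_upwards [tendsto_fst.eventually_mem hs, hshift.eventually_mem hs,
    tendsto_snd.eventually_mem (self_mem_nhdsWithin : Set.Ioi (0 : ℝ) ∈ 𝓝[>] 0)]
    with p h₁ h₂ hp
  exact abs_diffQuot_le hf v hp h₁ h₂

end DiffQuot

theorem LocallyLipschitzNear.upperSemicontinuousAt_clarkeDir {H : Type*}
    [NormedAddCommGroup H] [InnerProductSpace ℝ H] {f : H → ℝ} {x : H}
    (hf : LocallyLipschitzNear f x) (v : H) :
    UpperSemicontinuousAt (fun y => clarkeDir f y v) x := by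
  obtain ⟨ε, hε, L, hL⟩ := hf
  have hbound : ∀ᶠ y in 𝓝 x, ∀ᶠ p in 𝓝 y ×ˢ 𝓝[>] (0 : ℝ), |diffQuot f v p| ≤ L * ‖v‖ :=
    (Metric.isOpen_ball.eventually_mem (Metric.mem_ball_self hε)).mono fun y hy =>
      eventually_abs_diffQuot_le hL v (Metric.isOpen_ball.mem_nhds hy)
  intro c' hc'
  obtain ⟨c, hc, hcc'⟩ := exists_between hc'
  have hlt : ∀ᶠ p in 𝓝 x ×ˢ 𝓝[>] (0 : ℝ), diffQuot f v p < c :=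
    eventually_lt_of_limsup_lt hc
      ⟨L * ‖v‖, eventually_map.2 (hbound.self_of_nhds.mono fun _ h => le_of_abs_le h)⟩
  -- A rectangle `s ×ˢ u` on which the quotients are `< c` is also one for every `y` near `x`.
  obtain ⟨s, hs, u, hu, hsu⟩ := mem_prod_iff.1 hlt
  filter_upwards [hbound, eventually_eventually_nhds.2 hs] with y hy hsy
  have hcob : IsCoboundedUnder (· ≤ ·) (𝓝 y ×ˢ 𝓝[>] (0 : ℝ)) (diffQuot f v) :=
    IsBoundedUnder.isCoboundedUnder_le
      ⟨-(L * ‖v‖), eventually_map.2 (hy.mono fun _ h => neg_le_of_abs_le h)⟩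
  refine lt_of_le_of_lt (limsup_le_of_le hcob ?_) hcc'
  filter_upwards [prod_mem_prod hsy hu] with p hp using le_of_lt (hsu hp)

lemma goldsteinSubdiff_subset_halfSpace {H : Type*} [NormedAddCommGroup H]
    [InnerProductSpace ℝ H] {f : H → ℝ} {ε c : ℝ} {x v : H}
    (h : ∀ y ∈ Metric.closedBall x ε, clarkeDir f y v ≤ c) :
    goldsteinSubdiff f ε x ⊆ {w | ⟪w, v⟫ ≤ c} := by
  refine closure_minimal (convexHull_min ?_ ?_) ?_
  · simp only [Set.iUnion_subset_iff]
    exact fun y hy w hw => (hw v).trans (h y hy)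
  · exact convex_halfSpace_le ⟨fun a b => inner_add_left a b v,
      fun a b => real_inner_smul_left b v a⟩ c
  · exact isClosed_le (continuous_id.inner continuous_const) continuous_const

lemma eventually_closedBall_subset_of_tendsto {X ι : Type*} [PseudoMetricSpace X]
    {l : Filter ι} {xs : ι → X} {x : X} {εs : ι → ℝ} {s : Set X} (hx : Tendsto xs l (𝓝 x))
    (hε : Tendsto εs l (𝓝 0)) (hs : s ∈ 𝓝 x) :
    ∀ᶠ i in l, Metric.closedBall (xs i) (εs i) ⊆ s := by
  obtain ⟨r, hr, hrs⟩ := Metric.mem_nhds_iff.1 hs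
  have hsum : Tendsto (fun i => εs i + dist (xs i) x) l (𝓝 0) := by
    simpa using hε.add (tendsto_iff_dist_tendsto_zero.1 hx)
  filter_upwards [hsum.eventually (eventually_lt_nhds hr)] with i hi
  exact (Metric.closedBall_subset_ball' hi).trans hrs

theorem stmt3_general {H : Type*} [NormedAddCommGroup H] [InnerProductSpace ℝ H]
    (f : H → ℝ) (x : H) (hlip : LocallyLipschitzNear f x)
    (xs : ℕ → H) (hx : Tendsto xs atTop (𝓝 x))
    (εs : ℕ → ℝ) (hε : Tendsto εs atTop (𝓝 (0 : ℝ)))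
    (ws : ℕ → H) (hw : ∀ i, ws i ∈ goldsteinSubdiff f (εs i) (xs i))
    (w : H) (φ : ℕ → ℕ) (hφ : StrictMono φ)
    (hweak : ∀ v : H, Tendsto (fun l => ⟪ws (φ l), v⟫) atTop (𝓝 ⟪w, v⟫)) :
    w ∈ clarkeSubdiff f x := by
  intro v
  refine le_of_forall_gt_imp_ge_of_dense fun c hc => ?_
  have hnear : ∀ᶠ y in 𝓝 x, clarkeDir f y v ≤ c :=
    (hlip.upperSemicontinuousAt_clarkeDir v c hc).mono fun _ => le_of_lt
  have hws : ∀ᶠ i in atTop, ⟪ws i, v⟫ ≤ c := by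
    filter_upwards [eventually_closedBall_subset_of_tendsto hx hε hnear] with i hi
    exact goldsteinSubdiff_subset_halfSpace hi (hw i)
  exact le_of_tendsto (hweak v) (hφ.tendsto_atTop.eventually hws)

/-- Demi-closedness: weak sequential accumulation points of `w_i ∈ ∂_{ε_i} f(x_i)` with
`x_i → x`, `ε_i ↓ 0` belong to `∂f(x)`. -/
theorem stmt3 {H : Type*} [NormedAddCommGroup H] [InnerProductSpace ℝ H] [CompleteSpace H]
    (f : H → ℝ) (x : H) (hlip : LocallyLipschitzNear f x)
    (xs : ℕ → H) (hx : Tendsto xs atTop (𝓝 x))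
    (εs : ℕ → ℝ) (hεpos : ∀ i, 0 < εs i) (hε : Tendsto εs atTop (𝓝 (0 : ℝ)))
    (ws : ℕ → H) (hw : ∀ i, ws i ∈ goldsteinSubdiff f (εs i) (xs i))
    (w : H) (φ : ℕ → ℕ) (hφ : StrictMono φ)
    (hweak : ∀ v : H, Tendsto (fun l => ⟪ws (φ l), v⟫) atTop (𝓝 ⟪w, v⟫)) :
    w ∈ clarkeSubdiff f x :=
  stmt3_general f x hlip xs hx εs hε ws hw w φ hφ hweak
end
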